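/- arXiv:1505.03967 — 3 statements merged into one kernel-verified Lean document; each statement's English description precedes it below -/
import Mathlib

section
/- For every real number γ with 0 < γ ≤ 2 and every natural number m ≥ 1, one has |ψ(γ, m)| ≤ |ψ(γ, m-1)|; that is, the sequence m ↦ |ψ(γ, m)| of absolute values of the Grünwald–Letnikov weights is monotonically decreasing. -/
/-- Generalized binomial coefficient `C(a, m) = (∏_{n=0}^{m-1} (a - n)) / m!`. -/
noncomputable def genBinom (a : ℝ) (m : ℕ) : ℝ :=
  (∏ n ∈ Finset.range m, (a - (n : ℝ))) / (m.factorial : ℝ)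

/-- Grünwald–Letnikov weight `ψ(γ, m) = (-1)^m · C(1-γ, m)`. -/
noncomputable def psi (γ : ℝ) (m : ℕ) : ℝ :=
  (-1 : ℝ) ^ m * genBinom (1 - γ) m

/-! Each weight is the previous one times `(m + γ - 1) / (m + 1)`, a factor of absolute value
at most `1` exactly when `-2m ≤ γ ≤ 2`. -/

lemma genBinom_succ (a : ℝ) (k : ℕ) :
    genBinom a (k + 1) = genBinom a k * ((a - k) / (k + 1)) := by
  simp only [genBinom, Finset.prod_range_succ, Nat.factorial_succ, Nat.cast_mul, Nat.cast_succ]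
  field_simp

lemma psi_succ (γ : ℝ) (k : ℕ) : psi γ (k + 1) = psi γ k * ((k + γ - 1) / (k + 1)) := by
  rw [psi, psi, genBinom_succ, pow_succ]
  ring

lemma abs_psi_succ_le (γ : ℝ) (hγ0 : 0 ≤ γ) (hγ2 : γ ≤ 2) (k : ℕ) :
    |psi γ (k + 1)| ≤ |psi γ k| := by
  have hk : (0 : ℝ) ≤ k := k.cast_nonneg
  have hfactor : |((k : ℝ) + γ - 1) / (k + 1)| ≤ 1 := by
    rw [abs_div, abs_of_pos (by positivity : (0 : ℝ) < k + 1), div_le_one (by positivity),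
      abs_le]
    constructor <;> linarith
  rw [psi_succ, abs_mul]
  exact mul_le_of_le_one_right (abs_nonneg _) hfactor

theorem abs_psi_antitone (γ : ℝ) (hγ0 : 0 < γ) (hγ2 : γ ≤ 2) (m : ℕ) (hm : 1 ≤ m) :
    |psi γ m| ≤ |psi γ (m - 1)| := by
  obtain ⟨k, rfl⟩ := Nat.exists_eq_add_of_le' hm
  exact abs_psi_succ_le γ hγ0.le hγ2 k
end

section
/- For every real number γ with 0 < γ < 2, the Grünwald–Letnikov weights tend to zero: ψ(γ, m) → 0 as m → ∞. -/
/-!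
Writing `c = 2 - γ`, the weight is the partial product `ψ(γ, m) = ∏_{n<m} (1 - c/(n+1))`.
Apart from the first factor `1 - c = γ - 1`, every factor lies in `[0, 1]` because
`0 < c < 2`, and `1 - c/(n+1) ≤ exp(-c/(n+1))`; so the remaining product is at most
`exp(-c ∑ 1/(n+2))`, which tends to zero because the harmonic series diverges.
-/

open Filter Finset Topology

theorem tendsto_prod_range_one_sub_of_not_summable {a : ℕ → ℝ} (ha₀ : ∀ n, 0 ≤ a n)
    (ha₁ : ∀ n, a n ≤ 1) (ha : ¬Summable a) :
    Tendsto (fun m => ∏ n ∈ range m, (1 - a n)) atTop (𝓝 0) := by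
  have hsum : Tendsto (fun m => ∑ n ∈ range m, a n) atTop atTop :=
    (not_summable_iff_tendsto_nat_atTop_of_nonneg ha₀).mp ha
  have hexp : Tendsto (fun m => Real.exp (-∑ n ∈ range m, a n)) atTop (𝓝 0) :=
    Real.tendsto_exp_atBot.comp (tendsto_neg_atTop_atBot.comp hsum)
  refine squeeze_zero (fun m => prod_nonneg fun n _ => sub_nonneg.mpr (ha₁ n)) (fun m => ?_) hexp
  calc ∏ n ∈ range m, (1 - a n) ≤ ∏ n ∈ range m, Real.exp (-a n) :=
        prod_le_prod (fun n _ => sub_nonneg.mpr (ha₁ n))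
          fun n _ => by linarith [Real.add_one_le_exp (-a n)]
    _ = Real.exp (-∑ n ∈ range m, a n) := by rw [← sum_neg_distrib, Real.exp_sum]

theorem psi_eq_prod_range (γ : ℝ) (m : ℕ) :
    psi γ m = ∏ n ∈ range m, (1 - (2 - γ) / ((n : ℝ) + 1)) := by
  have hfactor (n : ℕ) : 1 - (2 - γ) / ((n : ℝ) + 1) = -1 * (1 - γ - n) / ((n : ℝ) + 1) := by
    field_simp
    ring
  have hfact : ∏ n ∈ range m, ((n : ℝ) + 1) = m.factorial := by
    rw [← prod_range_add_one_eq_factorial]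
    push_cast
    rfl
  rw [psi, genBinom, prod_congr rfl fun n _ => hfactor n, prod_div_distrib, prod_mul_distrib,
    prod_const, card_range, hfact]
  ring

theorem psi_succ_eq_mul_prod_range (γ : ℝ) (m : ℕ) :
    psi γ (m + 1) = (γ - 1) * ∏ n ∈ range m, (1 - (2 - γ) / ((n : ℝ) + 2)) := by
  rw [psi_eq_prod_range, prod_range_succ']
  simp only [Nat.cast_add, Nat.cast_one, Nat.cast_zero, add_assoc, one_add_one_eq_two]
  ring

theorem not_summable_div_add_two {c : ℝ} (hc : c ≠ 0) :
    ¬Summable fun n : ℕ => c / ((n : ℝ) + 2) := by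
  simp only [div_eq_mul_inv, summable_mul_left_iff hc]
  exact_mod_cast (summable_nat_add_iff 2).not.mpr Real.not_summable_natCast_inv

theorem psi_tendsto_zero (γ : ℝ) (hγ0 : 0 < γ) (hγ2 : γ < 2) :
    Filter.Tendsto (fun m : ℕ => psi γ m) Filter.atTop (nhds 0) := by
  rw [← tendsto_add_atTop_iff_nat 1]
  simp only [psi_succ_eq_mul_prod_range]
  have hprod := tendsto_prod_range_one_sub_of_not_summable
    (a := fun n : ℕ => (2 - γ) / ((n : ℝ) + 2))
    (fun n => div_nonneg (by linarith) (by positivity))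
    (fun n => (div_le_one (by positivity)).mpr (by linarith [n.cast_nonneg (α := ℝ)]))
    (not_summable_div_add_two (by linarith))
  simpa using hprod.const_mul (γ - 1)
end

section
/- Let c ∈ ℝ and let u : ℕ → ℤ → ℝ satisfy the one-dimensional Grünwald–Letnikov finite-difference scheme with γ = 2, namely u^{k+1}_j = u^k_j + c · ∑_{m=0}^{k} ψ(2, m) · (u^{k-m}_{j+1} - 2 u^{k-m}_j + u^{k-m}_{j-1}) for all k ∈ ℕ and j ∈ ℤ. Then for every k ≥ 1 and j ∈ ℤ, u satisfies the standard explicit wave scheme: u^{k+1}_j - 2 u^k_j + u^{k-1}_j = c · (u^{k}_{j+1} - 2 u^{k}_j + u^{k}_{j-1}). -/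
/-!
For `γ = 2` every weight is `ψ(2, m) = (-1)^m C(-1, m) = 1`, so the memory sum is the plain
cumulative sum of the past second differences. Subtracting the scheme at step `k - 1` from the
one at step `k` leaves only the newest term of that sum, which is the wave scheme.
-/

open Finset

lemma prod_range_neg_one_sub_natCast (m : ℕ) :
    ∏ n ∈ range m, ((-1 : ℝ) - n) = (-1) ^ m * m.factorial := by
  induction m with
  | zero => simp
  | succ m ih =>
    rw [prod_range_succ, ih, Nat.factorial_succ]
    push_cast
    ring

lemma genBinom_neg_one (m : ℕ) : genBinom (-1) m = (-1) ^ m := by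
  rw [genBinom, prod_range_neg_one_sub_natCast]
  field_simp

lemma psi_two (m : ℕ) : psi 2 m = 1 := by
  rw [psi, show (1 : ℝ) - 2 = -1 by norm_num, genBinom_neg_one, ← mul_pow]
  norm_num

lemma sub_two_mul_add_eq_of_increment_eq_partial_sum {R : Type*} [CommRing R] {a b : ℕ → R}
    (c : R) (h : ∀ k, a (k + 1) = a k + c * ∑ i ∈ range (k + 1), b i) (k : ℕ) :
    a (k + 2) - 2 * a (k + 1) + a k = c * b (k + 1) := by
  have hk := h k
  have hk₁ := h (k + 1)
  rw [sum_range_succ] at hk₁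
  linear_combination hk₁ - hk

theorem gl_scheme_gamma_two_is_wave_scheme (c : ℝ) (u : ℕ → ℤ → ℝ)
    (hu : ∀ k : ℕ, ∀ j : ℤ,
      u (k + 1) j = u k j + c * ∑ m ∈ Finset.range (k + 1),
        psi 2 m * (u (k - m) (j + 1) - 2 * u (k - m) j + u (k - m) (j - 1))) :
    ∀ k : ℕ, 1 ≤ k → ∀ j : ℤ,
      u (k + 1) j - 2 * u k j + u (k - 1) j =
        c * (u k (j + 1) - 2 * u k j + u k (j - 1)) := by
  intro k hk j
  obtain ⟨n, rfl⟩ := Nat.exists_eq_add_of_le' hk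
  have cumulative : ∀ k, u (k + 1) j = u k j + c * ∑ i ∈ range (k + 1),
      (u i (j + 1) - 2 * u i j + u i (j - 1)) := by
    intro k
    rw [hu k j, ← sum_range_reflect (fun i => u i (j + 1) - 2 * u i j + u i (j - 1))]
    simp only [psi_two, one_mul, add_tsub_cancel_right]
  exact sub_two_mul_add_eq_of_increment_eq_partial_sum (a := (u · j)) c cumulative n
end
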